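/- arXiv:1005.2656 — 3 statements merged into one kernel-verified Lean document; each statement's English description precedes it below -/
import Mathlib

section
/- Let L_n : ℝⁿ → ℂ be defined by L_n(x) = (i + x₁ + ⋯ + xₙ)⁻¹ · ∏_{k=1}^n (i + x_k)⁻¹, where x_k are the coordinates of x. Then L_n is integrable on ℝⁿ with respect to Lebesgue measure. -/
/-!
Write `y₀ = x₁ + ⋯ + xₙ` and `y_k = x_k`; then `‖L_n x‖ ≤ 2ⁿ⁺¹ ∏_{j=0}^{n} (1 + |y_j|)⁻¹`.
If `j` maximises `1 + |y_j|`, that factor dominates the geometric mean of the other `n`, so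
the product is at most `∑_j ∏_{i ≠ j} (1 + |y_i|)^{-(1+q)}` with `q = 1/(n+1)`.
Any `n` of the `n + 1` forms `y_i` are the coordinates of `x` after a shear of determinant one,
so each summand is, up to a volume-preserving change of variables, a product of integrable
one-variable functions.
-/

open MeasureTheory
open Finset Real

theorem measurePreserving_update_sum {ι : Type*} [Fintype ι] [DecidableEq ι] (k : ι) :
    MeasurePreserving (fun x : ι → ℝ => Function.update x k (∑ i, x i)) := by
  let M : Matrix ι ι ℝ := (1 : Matrix ι ι ℝ).updateRow k fun _ => 1
  have hrows : ∑ i, (1 : ℝ) • (1 : Matrix ι ι ℝ) i = fun _ => 1 := by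
    ext j; rw [Finset.sum_apply]; simp [Matrix.one_apply]
  have hdet : LinearMap.det (Matrix.toLin' M) = 1 := by
    rw [LinearMap.det_toLin']; simp only [M]; rw [← hrows, Matrix.det_updateRow_sum]; simp
  have hf : ⇑(Matrix.toLin' M) = fun x : ι → ℝ => Function.update x k (∑ i, x i) := by
    ext x i
    rcases eq_or_ne i k with rfl | hik
    · simp [M, Matrix.mulVec, dotProduct]
    · simp [M, Matrix.mulVec, dotProduct, hik, Matrix.one_apply]
  refine ⟨hf ▸ (Matrix.toLin' M).continuous_of_finiteDimensional.measurable, ?_⟩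
  rw [← hf, Real.map_linearMap_volume_pi_eq_smul_volume_pi (by simp [hdet])]
  simp [hdet]

theorem integrable_one_add_abs_rpow_neg {p : ℝ} (hp : 1 < p) :
    Integrable fun t : ℝ => (1 + |t|) ^ (-p) := by
  simpa using integrable_one_add_norm (E := ℝ) (μ := volume) (r := p) (by simpa using hp)

def coordsWithSum {ι : Type*} [Fintype ι] (x : ι → ℝ) : Option ι → ℝ :=
  fun i => i.elim (∑ k, x k) x

theorem integrable_prod_erase_coordsWithSum {ι : Type*} [Fintype ι] [DecidableEq ι] {p : ℝ}
    (hp : 1 < p) (j : Option ι) :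
    Integrable fun x : ι → ℝ => ∏ i ∈ univ.erase j, (1 + |coordsWithSum x i|) ^ (-p) := by
  set w : ℝ → ℝ := fun t => (1 + |t|) ^ (-p)
  have hprod : Integrable fun x : ι → ℝ => ∏ i, w (x i) := by
    rw [volume_pi]; exact Integrable.fintype_prod fun _ => integrable_one_add_abs_rpow_neg hp
  cases j with
  | none =>
    have herase : univ.erase (none : Option ι) = univ.map Function.Embedding.some := by
      ext (_ | i) <;> simp
    simpa [herase, coordsWithSum] using hprod
  | some k =>
    have herase : univ.erase (some k) = insertNone (univ.erase k) := by
      ext (_ | i) <;> simp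
    refine ((measurePreserving_update_sum k).integrable_comp_of_integrable hprod).congr
      (.of_forall fun x => ?_)
    simp only [Function.comp_apply, herase, prod_insertNone]
    rw [← mul_prod_erase univ _ (mem_univ k), Function.update_self]
    congr 1
    exact prod_congr rfl fun i hi => by rw [Function.update_of_ne (ne_of_mem_erase hi)]; rfl

theorem prod_inv_le_sum_prod_erase_rpow {ι : Type*} [Fintype ι] [DecidableEq ι] [Nonempty ι]
    {u : ι → ℝ} (hu : ∀ i, 1 ≤ u i) {q : ℝ} (hq : 0 ≤ q)
    (hq_card : q * ((Fintype.card ι : ℝ) - 1) ≤ 1) :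
    ∏ i, (u i)⁻¹ ≤ ∑ j, ∏ i ∈ univ.erase j, u i ^ (-(1 + q)) := by
  have hu_pos : ∀ i, 0 < u i := fun i => one_pos.trans_le (hu i)
  obtain ⟨j, -, hj⟩ := exists_max_image univ u univ_nonempty
  have hgeom : ∏ i ∈ univ.erase j, u i ^ q ≤ u j :=
    calc ∏ i ∈ univ.erase j, u i ^ q
        ≤ ∏ i ∈ univ.erase j, u j ^ q :=
          prod_le_prod (fun i _ => rpow_nonneg (hu_pos i).le q)
            fun i _ => rpow_le_rpow (hu_pos i).le (hj i (mem_univ i)) hq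
      _ = u j ^ (q * ((Fintype.card ι : ℝ) - 1)) := by
          rw [prod_const, card_erase_of_mem (mem_univ j), card_univ, ← rpow_natCast,
            ← rpow_mul (hu_pos j).le, Nat.cast_pred Fintype.card_pos]
      _ ≤ u j := by
          simpa using rpow_le_rpow_of_exponent_le (hu j) hq_card
  calc ∏ i, (u i)⁻¹ = (u j)⁻¹ * ∏ i ∈ univ.erase j, (u i)⁻¹ :=
        (mul_prod_erase _ _ (mem_univ j)).symm
    _ ≤ (∏ i ∈ univ.erase j, u i ^ q)⁻¹ * ∏ i ∈ univ.erase j, (u i)⁻¹ := by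
        gcongr
        · exact prod_nonneg fun i _ => inv_nonneg.2 (hu_pos i).le
        · exact prod_pos fun i _ => rpow_pos_of_pos (hu_pos i) q
    _ = ∏ i ∈ univ.erase j, u i ^ (-(1 + q)) := by
        rw [← prod_inv_distrib, ← prod_mul_distrib]
        refine prod_congr rfl fun i _ => ?_
        rw [rpow_neg (hu_pos i).le, rpow_add (hu_pos i), rpow_one, mul_inv, mul_comm]
    _ ≤ ∑ j, ∏ i ∈ univ.erase j, u i ^ (-(1 + q)) :=
        single_le_sum (f := fun j => ∏ i ∈ univ.erase j, u i ^ (-(1 + q)))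
          (fun j' _ => prod_nonneg fun i _ => rpow_nonneg (hu_pos i).le _) (mem_univ j)

theorem I_add_ofReal_ne_zero (t : ℝ) : Complex.I + t ≠ 0 := by
  intro h; simpa using congrArg Complex.im h

theorem norm_inv_I_add_ofReal_le (t : ℝ) : ‖(Complex.I + t)⁻¹‖ ≤ 2 * (1 + |t|)⁻¹ := by
  have h_im : 1 ≤ ‖Complex.I + t‖ := by simpa using Complex.abs_im_le_norm (Complex.I + t)
  have h_re : |t| ≤ ‖Complex.I + t‖ := by simpa using Complex.abs_re_le_norm (Complex.I + t)
  rw [norm_inv, ← div_eq_mul_inv, le_div_iff₀ (by positivity)]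
  calc ‖Complex.I + t‖⁻¹ * (1 + |t|) ≤ ‖Complex.I + t‖⁻¹ * (2 * ‖Complex.I + t‖) := by
        gcongr; linarith
    _ = 2 := by field_simp

theorem norm_inv_mul_prod_inv_le {ι : Type*} [Fintype ι] (x : ι → ℝ) :
    ‖(Complex.I + ∑ k, (x k : ℂ))⁻¹ * ∏ k, (Complex.I + (x k : ℂ))⁻¹‖ ≤
      2 ^ (Fintype.card ι + 1) * ∏ i, (1 + |coordsWithSum x i|)⁻¹ := by
  rw [← Complex.ofReal_sum, norm_mul, norm_prod, Fintype.prod_option]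
  calc ‖(Complex.I + ((∑ k, x k : ℝ) : ℂ))⁻¹‖ * ∏ k, ‖(Complex.I + (x k : ℂ))⁻¹‖
      ≤ (2 * (1 + |∑ k, x k|)⁻¹) * ∏ k, 2 * (1 + |x k|)⁻¹ := by
        gcongr with k
        · exact norm_inv_I_add_ofReal_le _
        · exact norm_inv_I_add_ofReal_le _
    _ = _ := by
        rw [prod_mul_distrib, prod_const, card_univ]
        simp only [coordsWithSum, Option.elim]
        ring

/-- The mollifier `L_n(x) = (i + x₁ + ⋯ + xₙ)⁻¹ ∏ₖ (i + x_k)⁻¹` is Lebesgue integrable on ℝⁿ. -/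
theorem Ln_integrable (n : ℕ) :
    Integrable (fun x : Fin n → ℝ =>
      (Complex.I + ∑ k, (x k : ℂ))⁻¹ * ∏ k, (Complex.I + (x k : ℂ))⁻¹)
      (volume : Measure (Fin n → ℝ)) := by
  set q : ℝ := ((n : ℝ) + 1)⁻¹
  have hq : 0 < q := by positivity
  have hdom : Integrable fun x : Fin n → ℝ =>
      2 ^ (n + 1) * ∑ j, ∏ i ∈ univ.erase j, (1 + |coordsWithSum x i|) ^ (-(1 + q)) :=
    (integrable_finsetSum _ fun j _ =>
      integrable_prod_erase_coordsWithSum (by linarith) j).const_mul _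
  have hcont : Continuous fun x : Fin n → ℝ =>
      (Complex.I + ∑ k, (x k : ℂ))⁻¹ * ∏ k, (Complex.I + (x k : ℂ))⁻¹ := by
    simp_rw [← Complex.ofReal_sum]
    fun_prop (disch := exact fun _ => I_add_ofReal_ne_zero _)
  refine hdom.mono' hcont.aestronglyMeasurable (.of_forall fun x => ?_)
  calc _ ≤ 2 ^ (n + 1) * ∏ i, (1 + |coordsWithSum x i|)⁻¹ := by
        simpa using norm_inv_mul_prod_inv_le x
    _ ≤ _ := by
        gcongr
        refine prod_inv_le_sum_prod_erase_rpow (fun i => by simp) hq.le ?_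
        simp only [Fintype.card_option, Fintype.card_fin, Nat.cast_add, Nat.cast_one,
          add_sub_cancel_right, q]
        rw [inv_mul_le_one₀ (by positivity)]
        linarith
end

section
/- Let L_n(x) = (i + x₁ + ⋯ + xₙ)⁻¹ · ∏_{k=1}^n (i + x_k)⁻¹ on ℝⁿ. For every multi-index μ there exists a smooth bounded function N_{n,μ} : ℝⁿ → ℂ such that ∂^μ L_n = N_{n,μ} · L_n. -/
/-- Partial derivative in the `k`-th coordinate direction. -/
noncomputable def pderiv' {n : ℕ} (k : Fin n) (f : (Fin n → ℝ) → ℂ) : (Fin n → ℝ) → ℂ :=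
  fun x => fderiv ℝ f x (Pi.single k 1)

/-- The iterated partial derivative `∂^μ = ∂₁^{μ₁} ⋯ ∂ₙ^{μₙ}` associated to a multi-index `μ`. -/
noncomputable def pderivMulti {n : ℕ} (μ : Fin n → ℕ) (f : (Fin n → ℝ) → ℂ) : (Fin n → ℝ) → ℂ :=
  (List.finRange n).foldr (fun k g => (pderiv' k)^[μ k] g) f

/-- The mollifier `L_n`. -/
noncomputable def Lmol (n : ℕ) : (Fin n → ℝ) → ℂ := fun x =>
  (Complex.I + ∑ k, (x k : ℂ))⁻¹ * ∏ k, (Complex.I + (x k : ℂ))⁻¹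

open Complex ContinuousLinearMap Finset

variable {n : ℕ}

noncomputable def Sfun (n : ℕ) : (Fin n → ℝ) → ℂ := fun x => Complex.I + ∑ k, (x k : ℂ)
noncomputable def Pfun {n : ℕ} (k : Fin n) : (Fin n → ℝ) → ℂ := fun x => Complex.I + (x k : ℂ)

lemma Sfun_ne_zero (x : Fin n → ℝ) : Sfun n x ≠ 0 := by
  intro h
  have h2 := congrArg Complex.im h
  simp [Sfun, Complex.im_sum] at h2

lemma Pfun_ne_zero (k : Fin n) (x : Fin n → ℝ) : Pfun k x ≠ 0 := by
  intro h
  have h2 := congrArg Complex.im h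
  simp [Pfun] at h2

lemma norm_Sfun_inv_le (x : Fin n → ℝ) : ‖(Sfun n x)⁻¹‖ ≤ 1 := by
  rw [norm_inv]
  have h1 : (1:ℝ) ≤ ‖Sfun n x‖ := by
    have := Complex.abs_im_le_norm (Sfun n x)
    have him : (Sfun n x).im = 1 := by simp [Sfun, Complex.im_sum]
    rw [him] at this; simpa using this
  calc ‖Sfun n x‖⁻¹ ≤ 1⁻¹ := by
        apply inv_anti₀ one_pos h1
    _ = 1 := inv_one

lemma norm_Pfun_inv_le (k : Fin n) (x : Fin n → ℝ) : ‖(Pfun k x)⁻¹‖ ≤ 1 := by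
  rw [norm_inv]
  have h1 : (1:ℝ) ≤ ‖Pfun k x‖ := by
    have := Complex.abs_im_le_norm (Pfun k x)
    have him : (Pfun k x).im = 1 := by simp [Pfun]
    rw [him] at this; simpa using this
  calc ‖Pfun k x‖⁻¹ ≤ 1⁻¹ := by apply inv_anti₀ one_pos h1
    _ = 1 := inv_one

noncomputable def SL (n : ℕ) : (Fin n → ℝ) →L[ℝ] ℂ :=
  ∑ j, Complex.ofRealCLM.comp (ContinuousLinearMap.proj j)

lemma hasFDerivAt_coord (j : Fin n) (x : Fin n → ℝ) :
    HasFDerivAt (fun x : Fin n → ℝ => ((x j : ℝ) : ℂ))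
      (Complex.ofRealCLM.comp (ContinuousLinearMap.proj j)) x := by
  have h := (Complex.ofRealCLM.comp (ContinuousLinearMap.proj j)).hasFDerivAt (x := x)
  exact h.congr_of_eventuallyEq (Filter.Eventually.of_forall fun y => rfl)

lemma hasFDerivAt_Sfun (x : Fin n → ℝ) : HasFDerivAt (Sfun n) (SL n) x := by
  have : HasFDerivAt (fun x : Fin n → ℝ => ∑ j, ((x j : ℂ)))
      (∑ j : Fin n, Complex.ofRealCLM.comp (ContinuousLinearMap.proj j)) x :=
    HasFDerivAt.fun_sum fun j _ => hasFDerivAt_coord j x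
  exact this.const_add Complex.I

lemma hasFDerivAt_Pfun (k : Fin n) (x : Fin n → ℝ) :
    HasFDerivAt (Pfun k) (Complex.ofRealCLM.comp (ContinuousLinearMap.proj k)) x :=
  (hasFDerivAt_coord k x).const_add Complex.I

lemma SL_apply_single (k : Fin n) : SL n (Pi.single k 1) = 1 := by
  simp [SL, ContinuousLinearMap.sum_apply, Pi.single_apply,
    apply_ite (Complex.ofReal), Finset.sum_ite_eq']

/-- inv composed with real-differentiable function -/
lemma HasFDerivAt.cinv {f : (Fin n → ℝ) → ℂ} {f' : (Fin n → ℝ) →L[ℝ] ℂ} {x : Fin n → ℝ}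
    (hf : HasFDerivAt f f' x) (h : f x ≠ 0) :
    HasFDerivAt (fun y => (f y)⁻¹) ((-(f x ^ 2)⁻¹) • f') x := by
  have h1 := (hasFDerivAt_inv h).restrictScalars ℝ
  have h2 := h1.comp x hf
  refine HasFDerivAt.congr_fderiv h2 ?_
  ext v
  simp [mul_comm]

inductive GoodFun (n : ℕ) : ((Fin n → ℝ) → ℂ) → Prop
  | sinv : GoodFun n (fun x => (Sfun n x)⁻¹)
  | pinv (k : Fin n) : GoodFun n (fun x => (Pfun k x)⁻¹)
  | const (c : ℂ) : GoodFun n (fun _ => c)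
  | add {f g} : GoodFun n f → GoodFun n g → GoodFun n (fun x => f x + g x)
  | mul {f g} : GoodFun n f → GoodFun n g → GoodFun n (fun x => f x * g x)

lemma contDiff_Sfun : ContDiff ℝ (⊤ : ℕ∞) (Sfun n) := by
  have : ContDiff ℝ (⊤ : ℕ∞) (fun x : Fin n → ℝ => ∑ j, ((x j : ℂ))) :=
    ContDiff.sum fun j _ => Complex.ofRealCLM.contDiff.comp (contDiff_apply ℝ ℝ j)
  exact contDiff_const.add this

lemma contDiff_Pfun (k : Fin n) : ContDiff ℝ (⊤ : ℕ∞) (Pfun k) :=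
  contDiff_const.add (Complex.ofRealCLM.contDiff.comp (contDiff_apply ℝ ℝ k))

lemma GoodFun.contDiff {f} (hf : GoodFun n f) : ContDiff ℝ (⊤ : ℕ∞) f := by
  induction hf with
  | sinv => exact contDiff_Sfun.inv Sfun_ne_zero
  | pinv k => exact (contDiff_Pfun k).inv (Pfun_ne_zero k)
  | const c => exact contDiff_const
  | add _ _ h1 h2 => exact h1.add h2
  | mul _ _ h1 h2 => exact h1.mul h2

lemma GoodFun.bounded {f} (hf : GoodFun n f) : ∃ C : ℝ, ∀ x, ‖f x‖ ≤ C := by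
  induction hf with
  | sinv => exact ⟨1, norm_Sfun_inv_le⟩
  | pinv k => exact ⟨1, norm_Pfun_inv_le k⟩
  | const c => exact ⟨‖c‖, fun _ => le_rfl⟩
  | add _ _ h1 h2 =>
      obtain ⟨C₁, h1⟩ := h1; obtain ⟨C₂, h2⟩ := h2
      exact ⟨C₁ + C₂, fun x => (norm_add_le _ _).trans (add_le_add (h1 x) (h2 x))⟩
  | mul _ _ h1 h2 =>
      obtain ⟨C₁, h1⟩ := h1; obtain ⟨C₂, h2⟩ := h2
      refine ⟨C₁ * C₂, fun x => ?_⟩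
      rw [norm_mul]
      exact mul_le_mul (h1 x) (h2 x) (norm_nonneg _)
        ((norm_nonneg _).trans (h1 (fun _ => 0)))

lemma GoodFun.pderiv {f} (hf : GoodFun n f) (k : Fin n) :
    ∃ g, GoodFun n g ∧ ∀ x, pderiv' k f x = g x := by
  induction hf with
  | sinv =>
      refine ⟨fun x => (-1) * ((Sfun n x)⁻¹ * (Sfun n x)⁻¹),
        .mul (.const (-1)) (.mul .sinv .sinv), fun x => ?_⟩
      have h := ((hasFDerivAt_Sfun x).cinv (Sfun_ne_zero x))
      rw [pderiv', h.fderiv]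
      simp only [ContinuousLinearMap.smul_apply, SL_apply_single, smul_eq_mul, pow_two, mul_inv,
        neg_mul, mul_one]
      ring
  | pinv j =>
      refine ⟨fun x => (if j = k then (-1:ℂ) else 0) * ((Pfun j x)⁻¹ * (Pfun j x)⁻¹),
        .mul (.const _) (.mul (.pinv j) (.pinv j)), fun x => ?_⟩
      have h := ((hasFDerivAt_Pfun j x).cinv (Pfun_ne_zero j x))
      rw [pderiv', h.fderiv]
      simp only [ContinuousLinearMap.smul_apply, ContinuousLinearMap.comp_apply,
        ContinuousLinearMap.proj_apply, Complex.ofRealCLM_apply, Pi.single_apply,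
        apply_ite (Complex.ofReal), pow_two, mul_inv, smul_eq_mul]
      by_cases hjk : j = k <;> simp [hjk] <;> ring
  | const c =>
      exact ⟨fun _ => 0, .const 0, fun x => by simp [pderiv', fderiv_const]⟩
  | add hf1 hf2 h1 h2 =>
      obtain ⟨g₁, hg₁, e₁⟩ := h1; obtain ⟨g₂, hg₂, e₂⟩ := h2
      refine ⟨fun x => g₁ x + g₂ x, .add hg₁ hg₂, fun x => ?_⟩
      rw [pderiv', fderiv_fun_add (hf1.contDiff.differentiable (by simp) x)
        (hf2.contDiff.differentiable (by simp) x)]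
      simp only [ContinuousLinearMap.add_apply]
      rw [← e₁ x, ← e₂ x]; rfl
  | mul hf1 hf2 h1 h2 =>
      rename_i f₁ f₂
      obtain ⟨g₁, hg₁, e₁⟩ := h1; obtain ⟨g₂, hg₂, e₂⟩ := h2
      refine ⟨fun x => f₁ x * g₂ x + f₂ x * g₁ x,
        .add (.mul hf1 hg₂) (.mul hf2 hg₁), fun x => ?_⟩
      rw [pderiv', fderiv_fun_mul (hf1.contDiff.differentiable (by simp) x)
        (hf2.contDiff.differentiable (by simp) x)]
      simp only [ContinuousLinearMap.add_apply, ContinuousLinearMap.smul_apply, smul_eq_mul]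
      rw [← e₁ x, ← e₂ x]; ring_nf; rfl

lemma GoodFun.prodP (s : Finset (Fin n)) :
    GoodFun n (fun x => ∏ k ∈ s, (Pfun k x)⁻¹) := by
  classical
  induction s using Finset.induction with
  | empty => simpa using GoodFun.const (n := n) 1
  | @insert a s hns ih =>
      have : (fun x => ∏ k ∈ insert a s, (Pfun k x)⁻¹)
          = fun x => (Pfun a x)⁻¹ * ∏ k ∈ s, (Pfun k x)⁻¹ := by
        funext x; rw [Finset.prod_insert hns]
      rw [this]
      exact .mul (.pinv a) ih

lemma GoodFun.lmol : GoodFun n (Lmol n) := .mul .sinv (GoodFun.prodP Finset.univ)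

set_option maxHeartbeats 1000000 in
lemma pderiv_Lmol (k : Fin n) (x : Fin n → ℝ) :
    pderiv' k (Lmol n) x = (-((Sfun n x)⁻¹ + (Pfun k x)⁻¹)) * Lmol n x := by
  classical
  have hS := (hasFDerivAt_Sfun x).cinv (Sfun_ne_zero x)
  have hQ' : HasFDerivAt (fun y : Fin n → ℝ => ∏ j, (Pfun j y)⁻¹)
      (∑ j, (∏ i ∈ Finset.univ.erase j, (Pfun i x)⁻¹) •
        ((-(Pfun j x ^ 2)⁻¹) • (Complex.ofRealCLM.comp (ContinuousLinearMap.proj j)))) x :=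
    HasFDerivAt.finset_prod (fun j _ => (hasFDerivAt_Pfun j x).cinv (Pfun_ne_zero j x))
  have hL := hS.fun_mul hQ'
  have heq : Lmol n = fun y => (Sfun n y)⁻¹ * ∏ j, (Pfun j y)⁻¹ := rfl
  rw [pderiv', heq, hL.fderiv]
  simp only [ContinuousLinearMap.add_apply, ContinuousLinearMap.smul_apply,
    ContinuousLinearMap.sum_apply, ContinuousLinearMap.comp_apply,
    ContinuousLinearMap.proj_apply, Complex.ofRealCLM_apply, smul_eq_mul,
    SL_apply_single, Pi.single_apply, apply_ite (Complex.ofReal),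
    Complex.ofReal_one, Complex.ofReal_zero, mul_ite, mul_one, mul_zero,
    Finset.sum_ite_eq', Finset.mem_univ, if_true]
  have hprod : (∏ j, (Pfun j x)⁻¹) = (Pfun k x)⁻¹ * ∏ j ∈ Finset.univ.erase k, (Pfun j x)⁻¹ :=
    (Finset.mul_prod_erase Finset.univ _ (Finset.mem_univ k)).symm
  rw [hprod]
  simp only [pow_two, mul_inv]
  ring

lemma transfer {a} (ha : GoodFun n a) (k : Fin n) :
    ∃ b, GoodFun n b ∧
      pderiv' k (fun x => a x * Lmol n x) = fun x => b x * Lmol n x := by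
  obtain ⟨da, hda, hda'⟩ := ha.pderiv k
  refine ⟨fun x => da x + (-1) * (a x * ((Sfun n x)⁻¹ + (Pfun k x)⁻¹)),
    .add hda (.mul (.const (-1)) (.mul ha (.add .sinv (.pinv k)))), ?_⟩
  funext x
  have h1 : pderiv' k (fun y => a y * Lmol n y) x
      = Lmol n x * pderiv' k a x + a x * pderiv' k (Lmol n) x := by
    rw [pderiv', fderiv_fun_mul (ha.contDiff.differentiable (by simp) x)
      (GoodFun.lmol.contDiff.differentiable (by simp) x)]
    simp only [ContinuousLinearMap.add_apply, ContinuousLinearMap.smul_apply, smul_eq_mul,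
      pderiv']
    ring
  show pderiv' k (fun y => a y * Lmol n y) x = _
  rw [h1, hda' x, pderiv_Lmol k x]
  ring


lemma iterate_transfer (k : Fin n) : ∀ (m : ℕ) (f),
    (∃ a, GoodFun n a ∧ f = fun x => a x * Lmol n x) →
    ∃ a, GoodFun n a ∧ (pderiv' k)^[m] f = fun x => a x * Lmol n x := by
  intro m
  induction m with
  | zero => intro f h; simpa using h
  | succ m ih =>
      rintro f ⟨a, ha, hf⟩
      rw [Function.iterate_succ_apply]
      apply ih
      obtain ⟨b, hb, hb'⟩ := transfer ha k
      exact ⟨b, hb, by rw [hf, hb']⟩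

lemma foldr_good (μ : Fin n → ℕ) : ∀ (l : List (Fin n)) (f),
    (∃ a, GoodFun n a ∧ f = fun x => a x * Lmol n x) →
    ∃ a, GoodFun n a ∧
      l.foldr (fun k g => (pderiv' k)^[μ k] g) f = fun x => a x * Lmol n x := by
  intro l
  induction l with
  | nil => intro f h; simpa using h
  | cons k l ih =>
      intro f hf
      exact iterate_transfer k (μ k) _ (ih f hf)

/-- For every multi-index `μ` there is a smooth bounded function `N` with `∂^μ L_n = N · L_n`. -/
theorem pderivMulti_Lmol (n : ℕ) (μ : Fin n → ℕ) :
    ∃ N : (Fin n → ℝ) → ℂ, ContDiff ℝ (⊤ : ℕ∞) N ∧ (∃ C : ℝ, ∀ x, ‖N x‖ ≤ C) ∧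
      pderivMulti μ (Lmol n) = fun x => N x * Lmol n x := by
  obtain ⟨a, ha, h⟩ := foldr_good μ (List.finRange n) (Lmol n)
    ⟨fun _ => 1, .const 1, by funext x; rw [one_mul]⟩
  exact ⟨a, ha.contDiff, ha.bounded, h⟩
end

section
/- Let Γ be a compact subset of the interior of the forward light cone V₊ = {p ∈ ℝⁿ : p₀ ≥ |p⃗|}, let Q(x₀,x₁,x₂,…) = (ζx₁, ζx₀, 0, …, 0) with ζ > 0, and let W = {x : x₁ ≥ |x₀|}. Then for any x, y ∈ ℝⁿ there exists M ∈ ℕ such that for all m ≥ M, all u ∈ Γ and all v ∈ V₊, the wedges W + x + mQu and −W + y − mQv are disjoint; more precisely, every point of (W + x + mQu) − (−W + y − mQv) lies in the interior of W. -/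
open Pointwise

/-- Geometric separation lemma: for `Γ` compact in the interior of the forward cone `V₊`
and `Q : x ↦ (ζx₁, ζx₀, 0, …)` with `ζ > 0`, for any `x, y` and sufficiently large `m`, the
wedges `W + x + mQu` and `-W + y - mQv` (for `u ∈ Γ`, `v ∈ V₊`) are disjoint; indeed every
difference of their points lies in the interior of `W`. -/
theorem wedge_separation (n : ℕ) (hn : 2 ≤ n) (ζ : ℝ) (hζ : 0 < ζ)
    (Q : (Fin n → ℝ) → (Fin n → ℝ))
    (hQ : ∀ p : Fin n → ℝ, ∀ i : Fin n,
      Q p i = if (i : ℕ) = 0 then ζ * p ⟨1, by omega⟩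
              else if (i : ℕ) = 1 then ζ * p ⟨0, by omega⟩ else 0)
    (Vplus : Set (Fin n → ℝ))
    (hV : Vplus = {p | Real.sqrt (∑ k ∈ Finset.univ.filter (fun k : Fin n => (k : ℕ) ≠ 0),
        (p k) ^ 2) ≤ p ⟨0, by omega⟩})
    (W : Set (Fin n → ℝ))
    (hW : W = {x | |x ⟨0, by omega⟩| ≤ x ⟨1, by omega⟩})
    (Γ : Set (Fin n → ℝ)) (hΓcompact : IsCompact Γ) (hΓ : Γ ⊆ interior Vplus)
    (x y : Fin n → ℝ) :
    ∃ M : ℕ, ∀ m ≥ M, ∀ u ∈ Γ, ∀ v ∈ Vplus,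
      (∀ p ∈ (fun a => a + x + (m : ℝ) • Q u) '' W,
        ∀ q ∈ (fun b => b + y - (m : ℝ) • Q v) '' (-W),
          p - q ∈ interior W) ∧
      Disjoint ((fun a => a + x + (m : ℝ) • Q u) '' W)
        ((fun b => b + y - (m : ℝ) • Q v) '' (-W)) := by
  have h0n : 0 < n := by omega
  have h1n : 1 < n := by omega
  set i0 : Fin n := ⟨0, h0n⟩ with hi0
  set i1 : Fin n := ⟨1, h1n⟩ with hi1
  set S : Finset (Fin n) := Finset.univ.filter (fun k : Fin n => (k : ℕ) ≠ 0) with hS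
  have hne : i0 ≠ i1 := by simp [hi0, hi1, Fin.ext_iff]
  have hQ0 : ∀ p : Fin n → ℝ, Q p i0 = ζ * p i1 := fun p => by
    rw [hQ p i0]; simp [hi0, hi1]
  have hQ1 : ∀ p : Fin n → ℝ, Q p i1 = ζ * p i0 := fun p => by
    rw [hQ p i1]; simp [hi0, hi1]
  have hWmem : ∀ z : Fin n → ℝ, z ∈ W ↔ |z i0| ≤ z i1 := fun z => by
    rw [hW]; exact Iff.rfl
  have hVmem : ∀ z : Fin n → ℝ, z ∈ Vplus ↔ Real.sqrt (∑ k ∈ S, (z k) ^ 2) ≤ z i0 :=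
    fun z => by rw [hV]; exact Iff.rfl
  have hi1S : i1 ∈ S := by simp [hS, hi1]
  have hsq : ∀ w : Fin n → ℝ, |w i1| ≤ Real.sqrt (∑ k ∈ S, (w k) ^ 2) := by
    intro w
    calc |w i1| = Real.sqrt ((w i1) ^ 2) := (Real.sqrt_sq_eq_abs _).symm
      _ ≤ _ := Real.sqrt_le_sqrt (Finset.single_le_sum (fun k _ => sq_nonneg (w k)) hi1S)
  have hUsub : {z : Fin n → ℝ | |z i0| < z i1} ⊆ interior W :=
    interior_maximal (fun z hz => (hWmem z).mpr (le_of_lt hz))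
      (isOpen_lt (continuous_abs.comp (continuous_apply i0)) (continuous_apply i1))
  -- 0 is not in the interior of W
  have h0notin : (0 : Fin n → ℝ) ∉ interior W := by
    intro h
    rw [mem_interior_iff_mem_nhds, Metric.mem_nhds_iff] at h
    obtain ⟨ε, hε, hball⟩ := h
    set c : Fin n → ℝ := fun i => if i = i1 then -(ε / 2) else 0 with hc
    have hcball : c ∈ Metric.ball (0 : Fin n → ℝ) ε := by
      rw [Metric.mem_ball, dist_pi_lt_iff hε]
      intro i
      by_cases hi : i = i1 <;>
        simp [hc, hi, Real.dist_eq, abs_of_nonneg, hε.le, abs_of_nonpos] <;> linarith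
    have hcW := (hWmem c).mp (hball hcball)
    simp [hc, hne] at hcW
    linarith
  -- interior of Vplus is strict
  have hVint : ∀ u ∈ interior Vplus, Real.sqrt (∑ k ∈ S, (u k) ^ 2) < u i0 := by
    intro u hu
    rw [mem_interior_iff_mem_nhds, Metric.mem_nhds_iff] at hu
    obtain ⟨ε, hε, hball⟩ := hu
    set u' : Fin n → ℝ := Function.update u i0 (u i0 - ε / 2) with hu'
    have hu'ball : u' ∈ Metric.ball u ε := by
      rw [Metric.mem_ball, dist_pi_lt_iff hε]
      intro i
      by_cases hi : i = i0
      · subst hi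
        rw [hu', Function.update_self, Real.dist_eq]
        have h' : u i0 - ε / 2 - u i0 = -(ε / 2) := by ring
        rw [h', abs_neg, abs_of_pos (by linarith)]
        linarith
      · rw [hu', Function.update_of_ne hi, dist_self]; exact hε
    have hu'V := (hVmem u').mp (hball hu'ball)
    have hsum : ∑ k ∈ S, (u' k) ^ 2 = ∑ k ∈ S, (u k) ^ 2 := by
      refine Finset.sum_congr rfl fun k hk => ?_
      have hk0 : k ≠ i0 := by
        simp only [hS, Finset.mem_filter] at hk
        intro h; rw [h] at hk; exact hk.2 rfl
      rw [hu', Function.update_of_ne hk0]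
    rw [hsum] at hu'V
    simp only [hu', Function.update_self] at hu'V
    linarith
  -- uniform gap on Γ
  obtain ⟨δ, hδpos, hδ⟩ : ∃ δ > 0, ∀ u ∈ Γ, |u i1| ≤ u i0 - δ := by
    rcases Γ.eq_empty_or_nonempty with hΓe | hΓne
    · exact ⟨1, one_pos, by simp [hΓe]⟩
    · have hcont : ContinuousOn
          (fun u : Fin n → ℝ => u i0 - Real.sqrt (∑ k ∈ S, (u k) ^ 2)) Γ :=
        ((continuous_apply i0).sub (Real.continuous_sqrt.comp
          (continuous_finset_sum _ fun k _ => (continuous_apply k).pow 2))).continuousOn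
      obtain ⟨u₀, hu₀Γ, hmin⟩ := hΓcompact.exists_isMinOn hΓne hcont
      refine ⟨u₀ i0 - Real.sqrt (∑ k ∈ S, (u₀ k) ^ 2), by
        have := hVint u₀ (hΓ hu₀Γ); linarith, fun u hu => ?_⟩
      have h1 := isMinOn_iff.mp hmin u hu
      have h2 := hsq u
      linarith
  -- choose M
  set C : ℝ := |x i0 - y i0| + |x i1 - y i1| with hC
  refine ⟨⌈(C + 1) / (ζ * δ)⌉₊, fun m hm u hu v hv => ?_⟩
  have hζδ : 0 < ζ * δ := mul_pos hζ hδpos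
  have hmbig : C + 1 ≤ (m : ℝ) * (ζ * δ) := by
    have h1 : (C + 1) / (ζ * δ) ≤ (⌈(C + 1) / (ζ * δ)⌉₊ : ℝ) := Nat.le_ceil _
    have h2 : ((⌈(C + 1) / (ζ * δ)⌉₊ : ℕ) : ℝ) ≤ (m : ℝ) := by exact_mod_cast hm
    rw [div_le_iff₀ hζδ] at h1
    nlinarith
  have hmain : ∀ p ∈ (fun a => a + x + (m : ℝ) • Q u) '' W,
      ∀ q ∈ (fun b => b + y - (m : ℝ) • Q v) '' (-W), p - q ∈ interior W := by
    rintro p ⟨a, haW, rfl⟩ q ⟨b, hbW, rfl⟩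
    apply hUsub
    have ha := (hWmem a).mp haW
    have hb : |b i0| ≤ -b i1 := by
      have := (hWmem (-b)).mp (Set.mem_neg.mp hbW)
      simpa using this
    have hu1 := hδ u hu
    have hv1 : |v i1| ≤ v i0 := (hsq v).trans ((hVmem v).mp hv)
    have hmζ : (0 : ℝ) ≤ (m : ℝ) * ζ := by positivity
    have hbu : |(m : ℝ) * ζ * u i1| ≤ (m : ℝ) * ζ * (u i0 - δ) := by
      rw [abs_mul, abs_of_nonneg hmζ]
      exact mul_le_mul_of_nonneg_left hu1 hmζ
    have hbv : |(m : ℝ) * ζ * v i1| ≤ (m : ℝ) * ζ * v i0 := by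
      rw [abs_mul, abs_of_nonneg hmζ]
      exact mul_le_mul_of_nonneg_left hv1 hmζ
    obtain ⟨hbu1, hbu2⟩ := abs_le.mp hbu
    obtain ⟨hbv1, hbv2⟩ := abs_le.mp hbv
    obtain ⟨ha1, ha2⟩ := abs_le.mp ha
    obtain ⟨hb1, hb2⟩ := abs_le.mp hb
    have hx0 := le_abs_self (x i0 - y i0)
    have hx0' := neg_abs_le (x i0 - y i0)
    have hx1 := le_abs_self (x i1 - y i1)
    have hx1' := neg_abs_le (x i1 - y i1)
    simp only [Set.mem_setOf_eq, Pi.sub_apply, Pi.add_apply, Pi.smul_apply, smul_eq_mul, hQ0, hQ1]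
    rw [abs_lt]
    constructor <;> nlinarith [sq_nonneg ((m:ℝ)*ζ)]
  refine ⟨hmain, ?_⟩
  rw [Set.disjoint_left]
  intro z hzA hzB
  have := hmain z hzA z hzB
  rw [sub_self] at this
  exact h0notin this
end
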